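/- Let R be a commutative ring, and let q : K → H and p : H → L be surjective homomorphisms of Lie algebras over R. Suppose the descending series of ker p in H (defined by N⁽¹⁾ = ker p, N⁽ᵐ⁺¹⁾ = ⁅H, N⁽ᵐ⁾⁆) vanishes at step k, and the corresponding series of ker q in K vanishes at step l. Then the series of ker(p ∘ q) in K vanishes at step k + l. (Instance of Lemma 1.9(1) in the category of Lie algebras with shrinking functor s(L, N) = [L, N].) -/
import Mathlib


/-- The descending series of a Lie ideal `N` of a Lie algebra `W` over `R`: `N⁽¹⁾ = N`,
`N⁽ᵐ⁺¹⁾ = ⁅W, N⁽ᵐ⁾⁆`.  (The value at `0` is set to `⊤` and is irrelevant.) -/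
def lieDescSeries (R : Type*) {W : Type*} [CommRing R] [LieRing W] [LieAlgebra R W]
    (N : LieIdeal R W) : ℕ → LieIdeal R W
  | 0 => ⊤
  | 1 => N
  | (m + 2) => ⁅(⊤ : LieIdeal R W), lieDescSeries R N (m + 1)⁆

section Aux

variable {R W : Type*} [CommRing R] [LieRing W] [LieAlgebra R W]

lemma lieDescSeries_succ (N : LieIdeal R W) (m : ℕ) (hm : 1 ≤ m) :
    lieDescSeries R N (m + 1) = ⁅(⊤ : LieIdeal R W), lieDescSeries R N m⁆ := by
  cases m with
  | zero => omega
  | succ n => rfl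

lemma lieDescSeries_mono {N M : LieIdeal R W} (h : N ≤ M) :
    ∀ m, lieDescSeries R N m ≤ lieDescSeries R M m
  | 0 => le_rfl
  | 1 => h
  | (m + 2) => LieSubmodule.mono_lie_right _ (lieDescSeries_mono h (m + 1))

lemma lieDescSeries_map_le {K : Type*} [LieRing K] [LieAlgebra R K]
    (f : W →ₗ⁅R⁆ K) (N : LieIdeal R W) :
    ∀ m, LieIdeal.map f (lieDescSeries R N m) ≤ lieDescSeries R (LieIdeal.map f N) m
  | 0 => le_top
  | 1 => le_rfl
  | (m + 2) => le_trans (LieIdeal.map_bracket_le f) <|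
      LieSubmodule.mono_lie le_top (lieDescSeries_map_le f N (m + 1))

lemma lieDescSeries_add_le {N M : LieIdeal R W} {k : ℕ} (hk : 1 ≤ k)
    (h : lieDescSeries R N k ≤ M) :
    ∀ l, 1 ≤ l → lieDescSeries R N (k + l) ≤ lieDescSeries R M l := by
  intro l
  induction l with
  | zero => omega
  | succ n ih =>
    intro _
    rcases Nat.eq_zero_or_pos n with h1 | hn
    · subst h1
      rw [lieDescSeries_succ N k hk]
      exact le_trans (LieSubmodule.lie_le_right _ _) h
    · 
      rw [show k + (n + 1) = (k + n) + 1 by ring, lieDescSeries_succ N (k + n) (by omega),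
        lieDescSeries_succ M n hn]
      exact LieSubmodule.mono_lie_right _ (ih hn)

end Aux

/-- Let `q : K → H` and `p : H → L` be surjective homomorphisms of Lie
algebras over a commutative ring `R`.  If the descending series of `ker p` in `H` vanishes at
step `k` and that of `ker q` in `K` vanishes at step `l`, then the descending series of
`ker (p ∘ q)` in `K` vanishes at step `k + l`. -/
theorem lieDescSeries_ker_comp_trivial {R K H L : Type*} [CommRing R]
    [LieRing K] [LieAlgebra R K] [LieRing H] [LieAlgebra R H] [LieRing L] [LieAlgebra R L]
    (q : K →ₗ⁅R⁆ H) (p : H →ₗ⁅R⁆ L)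
    (hq : Function.Surjective q) (hp : Function.Surjective p)
    (k l : ℕ) (hk : 1 ≤ k) (hl : 1 ≤ l)
    (hpk : lieDescSeries R p.ker k = ⊥) (hql : lieDescSeries R q.ker l = ⊥) :
    lieDescSeries R (p.comp q).ker (k + l) = ⊥ := by
  have hmap : LieIdeal.map q (p.comp q).ker ≤ p.ker := by
    rw [LieIdeal.map_le_iff_le_comap]
    intro x hx
    simp only [LieIdeal.mem_comap, LieHom.mem_ker] at *
    simpa using hx
  have h1 : lieDescSeries R (p.comp q).ker k ≤ q.ker := by
    have := le_trans (lieDescSeries_map_le q (p.comp q).ker k)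
      (le_trans (lieDescSeries_mono hmap k) hpk.le)
    rw [LieIdeal.map_le_iff_le_comap] at this
    intro x hx
    have := this hx
    simpa [LieHom.mem_ker] using this
  exact le_bot_iff.mp (le_trans (lieDescSeries_add_le hk h1 l hl) hql.le)
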